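/- For any square matrix Λ of the form Λ_{t+1} = Λ_t + Σ_{a∈S_t} z_{ta} z_{ta}ᵀ with Λ_t positive definite, the determinant satisfies det(Λ_{t+1}) ≥ det(Λ_t) · (1 + Σ_{a∈S_t} ‖z_{ta}‖²_{Λ_t⁻¹}). -/

import Mathlib

/-!
Write `Λ = B * B` with `B = √Λ` and `M = ∑ a ∈ S, z a ⊗ z a`. Then `Λ + M = B * (1 + N) * B` for
the positive semidefinite `N = B⁻¹ * M * B⁻¹`, whose trace is `tr (Λ⁻¹ * M) = ∑ ‖z a‖²_{Λ⁻¹}`.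
If `λᵢ ≥ 0` are the eigenvalues of `N`, then `det (1 + N) = ∏ (1 + λᵢ) ≥ 1 + ∑ λᵢ = 1 + tr N`.
-/

open Matrix Finset

theorem Finset.one_add_sum_le_prod_one_add {ι R : Type*} [CommSemiring R] [PartialOrder R]
    [IsOrderedRing R] (s : Finset ι) {f : ι → R} (hf : ∀ i ∈ s, 0 ≤ f i) :
    1 + ∑ i ∈ s, f i ≤ ∏ i ∈ s, (1 + f i) := by
  classical
  induction s using Finset.induction with
  | empty => simp
  | @insert a s ha ih =>
    rw [sum_insert ha, prod_insert ha]
    have hfa : 0 ≤ f a := hf a (mem_insert_self a s)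
    have hsum : 0 ≤ ∑ i ∈ s, f i := sum_nonneg fun i hi => hf i (mem_insert_of_mem hi)
    have hrest := ih fun i hi => hf i (mem_insert_of_mem hi)
    calc 1 + (f a + ∑ i ∈ s, f i)
        ≤ 1 + (f a + ∑ i ∈ s, f i) + f a * ∑ i ∈ s, f i :=
          le_add_of_nonneg_right (mul_nonneg hfa hsum)
      _ = (1 + f a) * (1 + ∑ i ∈ s, f i) := by ring
      _ ≤ (1 + f a) * ∏ i ∈ s, (1 + f i) :=
          mul_le_mul_of_nonneg_left hrest (add_nonneg zero_le_one hfa)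

namespace Matrix

variable {n : Type*} [Fintype n] [DecidableEq n]

theorem PosSemidef.one_add_trace_le_det_one_add {N : Matrix n n ℝ} (hN : N.PosSemidef) :
    1 + N.trace ≤ (1 + N).det := by
  have hN' := hN.isHermitian
  set U := hN'.eigenvectorUnitary
  have hdiag : 1 + N = Unitary.conjStarAlgAut ℝ _ U (diagonal (1 + hN'.eigenvalues)) := by
    conv_lhs => rw [hN'.spectral_theorem]
    rw [← map_one (Unitary.conjStarAlgAut ℝ _ U), ← map_add, ← diagonal_one, diagonal_add]
    rfl
  have hdet : (1 + N).det = ∏ i, (1 + hN'.eigenvalues i) := by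
    rw [hdiag, Unitary.conjStarAlgAut_apply, det_mul_right_comm, Unitary.mul_star_self_of_mem U.2,
      one_mul, det_diagonal]
    rfl
  rw [hdet, hN'.trace_eq_sum_eigenvalues]
  exact one_add_sum_le_prod_one_add _ fun i _ => hN.eigenvalues_nonneg i

open scoped MatrixOrder in
theorem PosDef.det_mul_one_add_trace_inv_mul_le_det_add {A M : Matrix n n ℝ} (hA : A.PosDef)
    (hM : M.PosSemidef) : A.det * (1 + (A⁻¹ * M).trace) ≤ (A + M).det := by
  set B := CFC.sqrt A
  have hB : B.IsHermitian := (CFC.sqrt_nonneg A).posSemidef.isHermitian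
  have hBB : B * B = A := CFC.sqrt_mul_sqrt_self A hA.posSemidef.nonneg
  have hBdet : IsUnit B.det := (isUnit_iff_isUnit_det B).mp hA.isStrictlyPositive.isUnit_cfcSqrt
  set N := B⁻¹ * M * B⁻¹
  have hN : N.PosSemidef := by
    have := hM.mul_mul_conjTranspose_same B⁻¹
    rwa [conjTranspose_nonsing_inv, hB.eq] at this
  have hsplit : A + M = B * (1 + N) * B := by
    rw [mul_add, add_mul, mul_one, hBB, ← mul_assoc, ← mul_assoc, mul_nonsing_inv _ hBdet,
      one_mul, mul_assoc, nonsing_inv_mul _ hBdet, mul_one]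
  have htrace : N.trace = (A⁻¹ * M).trace := by rw [trace_mul_cycle, ← mul_inv_rev, hBB]
  calc A.det * (1 + (A⁻¹ * M).trace) = A.det * (1 + N.trace) := by rw [htrace]
    _ ≤ A.det * (1 + N).det :=
      mul_le_mul_of_nonneg_left hN.one_add_trace_le_det_one_add hA.det_pos.le
    _ = (A + M).det := by rw [hsplit, det_mul, det_mul, ← hBB, det_mul]; ring

end Matrix

/-- Multi-rank-one determinant update inequality. -/
theorem stmt_2 (d : ℕ) (ι : Type*) (S : Finset ι) (z : ι → Fin d → ℝ)
    (Λ : Matrix (Fin d) (Fin d) ℝ) (hΛ : Λ.PosDef) :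
    Λ.det * (1 + ∑ a ∈ S, z a ⬝ᵥ (Λ⁻¹ *ᵥ z a)) ≤
      (Λ + ∑ a ∈ S, vecMulVec (z a) (z a)).det := by
  have hM : (∑ a ∈ S, vecMulVec (z a) (z a)).PosSemidef :=
    posSemidef_sum S fun a _ => by simpa using posSemidef_vecMulVec_self_star (z a)
  have htrace : (Λ⁻¹ * ∑ a ∈ S, vecMulVec (z a) (z a)).trace =
      ∑ a ∈ S, z a ⬝ᵥ (Λ⁻¹ *ᵥ z a) := by
    simp only [mul_sum, trace_sum, mul_vecMulVec, trace_vecMulVec, dotProduct_comm]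
  simpa only [htrace] using hΛ.det_mul_one_add_trace_inv_mul_le_det_add hM
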